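/- arXiv:2206.15018 — 2 statements merged into one kernel-verified Lean document; each statement's English description precedes it below -/
import Mathlib

section
/- Let M = [[A, B], [C, D]] be a real matrix of rank r with rank(A) < r, Range(B) ⊆ Range(A), and Range(Cᵀ) ⊆ Range(Aᵀ). Then there exists D' ≠ D such that the matrix [[A, B], [C, D']] also has rank r. (In fact, D' = CA⁺B + E works for any E of rank r - rank(A).) -/
open Matrix

/-- `P` is the Moore–Penrose pseudoinverse of `A` (the four Penrose conditions). -/
def IsMPInv {m n : ℕ} (A : Matrix (Fin m) (Fin n) ℝ) (P : Matrix (Fin n) (Fin m) ℝ) : Prop :=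
  A * P * A = A ∧ P * A * P = P ∧ (A * P)ᵀ = A * P ∧ (P * A)ᵀ = P * A

/-!
The range inclusions give `B = A X` and `C = W A`, so unimodular block-triangular factors reduce `M`
to `diag(A, S)` with `S = D - C X`, whence `rank M = rank A + rank S`. Thus `rank A < r` forces
`S ≠ 0`, and replacing `D` by `D + S` turns the Schur complement into `2 S`, of the same rank.
-/
theorem Submodule.finrank_prod {K M N : Type*} [Field K] [AddCommGroup M] [AddCommGroup N]
    [Module K M] [Module K N] [FiniteDimensional K M] [FiniteDimensional K N]
    (P : Submodule K M) (Q : Submodule K N) :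
    Module.finrank K (P.prod Q) = Module.finrank K P + Module.finrank K Q := by
  have h := LinearMap.finrank_range_of_inj (f := P.subtype.prodMap Q.subtype)
    (Prod.map_injective.mpr ⟨P.injective_subtype, Q.injective_subtype⟩)
  rwa [LinearMap.range_prodMap, Submodule.range_subtype, Submodule.range_subtype,
    Module.finrank_prod] at h

namespace Matrix

variable {l m n o : Type*}

theorem exists_mul_eq_of_range_le {R : Type*} [CommSemiring R] [Fintype n] [Fintype o]
    {A : Matrix m n R} {B : Matrix m o R}
    (h : LinearMap.range B.mulVecLin ≤ LinearMap.range A.mulVecLin) :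
    ∃ X : Matrix n o R, A * X = B := by
  have hcol : ∀ j, B.col j ∈ LinearMap.range A.mulVecLin := fun j =>
    h (B.range_mulVecLin ▸ Submodule.subset_span ⟨j, rfl⟩)
  choose x hx using hcol
  refine ⟨(of x)ᵀ, ext fun i j => ?_⟩
  simpa [mul_apply, mulVec, dotProduct] using congrFun (hx j) i

theorem exists_mul_eq_of_range_transpose_le {R : Type*} [CommSemiring R] [Fintype m] [Fintype l]
    {A : Matrix m n R} {C : Matrix l n R}
    (h : LinearMap.range Cᵀ.mulVecLin ≤ LinearMap.range Aᵀ.mulVecLin) :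
    ∃ W : Matrix l m R, W * A = C := by
  obtain ⟨Y, hY⟩ := exists_mul_eq_of_range_le h
  exact ⟨Yᵀ, by rw [← transpose_transpose C, ← hY, transpose_mul, transpose_transpose]⟩

theorem fromBlocks_eq_mul_fromBlocks_zero_zero_mul {R : Type*} [Ring R] [Fintype l]
    [Fintype m] [Fintype n] [Fintype o] [DecidableEq l] [DecidableEq m] [DecidableEq n]
    [DecidableEq o]
    {A : Matrix m n R} {B : Matrix m o R} {C : Matrix l n R} (D : Matrix l o R)
    {X : Matrix n o R} {W : Matrix l m R} (hX : A * X = B) (hW : W * A = C) :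
    fromBlocks A B C D =
      fromBlocks (1 : Matrix m m R) 0 W (1 : Matrix l l R) * fromBlocks A 0 0 (D - C * X) *
        fromBlocks (1 : Matrix n n R) X 0 (1 : Matrix o o R) := by
  simp only [fromBlocks_multiply, Matrix.one_mul, Matrix.mul_one, Matrix.zero_mul,
    Matrix.mul_zero, add_zero, zero_add, hX, hW, add_sub_cancel]

variable {K : Type*} [Field K] [Fintype l] [Fintype m] [Fintype n] [Fintype o]

theorem rank_fromBlocks_zero_zero (A : Matrix m n K) (S : Matrix l o K) :
    (fromBlocks A 0 0 S).rank = A.rank + S.rank := by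
  let eₗ := LinearEquiv.sumArrowLequivProdArrow m l K K
  let eᵣ := LinearEquiv.sumArrowLequivProdArrow n o K K
  have hconj : (fromBlocks A 0 0 S).mulVecLin =
      eₗ.symm.toLinearMap ∘ₗ A.mulVecLin.prodMap S.mulVecLin ∘ₗ eᵣ.toLinearMap := by
    ext x (i | i) <;> simp [eₗ, eᵣ, fromBlocks_mulVec] <;> rfl
  rw [rank, hconj, LinearMap.range_comp, LinearMap.range_comp_of_range_eq_top _ eᵣ.range,
    LinearEquiv.finrank_map_eq, LinearMap.range_prodMap, Submodule.finrank_prod]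
  rfl

theorem rank_fromBlocks_eq_rank_add_rank_sub [DecidableEq l] [DecidableEq m] [DecidableEq n]
    [DecidableEq o] {A : Matrix m n K} {B : Matrix m o K} {C : Matrix l n K} (D : Matrix l o K)
    {X : Matrix n o K} {W : Matrix l m K} (hX : A * X = B) (hW : W * A = C) :
    (fromBlocks A B C D).rank = A.rank + (D - C * X).rank := by
  rw [fromBlocks_eq_mul_fromBlocks_zero_zero_mul D hX hW,
    rank_mul_eq_left_of_isUnit_det _ _ (by simp),
    rank_mul_eq_right_of_isUnit_det _ _ (by simp),
    rank_fromBlocks_zero_zero]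

end Matrix

/-- If `rank A < r` and the range inclusions hold, the completion is not unique. -/
theorem nonunique_completion_of_rank_lt {p q s t r : ℕ}
    (A : Matrix (Fin p) (Fin q) ℝ) (B : Matrix (Fin p) (Fin s) ℝ)
    (C : Matrix (Fin t) (Fin q) ℝ) (D : Matrix (Fin t) (Fin s) ℝ)
    (hM : (fromBlocks A B C D).rank = r) (hA : A.rank < r)
    (hB : LinearMap.range B.mulVecLin ≤ LinearMap.range A.mulVecLin)
    (hC : LinearMap.range Cᵀ.mulVecLin ≤ LinearMap.range Aᵀ.mulVecLin) :
    ∃ D' : Matrix (Fin t) (Fin s) ℝ, D' ≠ D ∧ (fromBlocks A B C D').rank = r := by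
  obtain ⟨X, hX⟩ := exists_mul_eq_of_range_le hB
  obtain ⟨W, hW⟩ := exists_mul_eq_of_range_transpose_le hC
  have hrank := fun D' => rank_fromBlocks_eq_rank_add_rank_sub D' hX hW
  have hS : D - C * X ≠ 0 := by
    rintro hS
    rw [hrank, hS, rank_zero, add_zero] at hM
    omega
  refine ⟨D + (D - C * X), by simpa using hS, ?_⟩
  have hdouble : D + (D - C * X) - C * X = (2 : ℝ) • (D - C * X) := by
    rw [two_smul, add_sub_right_comm]
  rw [hrank, hdouble,
    rank_smul_of_mem_nonZeroDivisors _ (mem_nonZeroDivisors_of_ne_zero two_ne_zero), ← hrank, hM]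
end

section
/- Let M = [[F, H, E], [A, G, B], [C, K, D]] be a real matrix of rank r where the blocks F, A, G, K, D are fixed (staircase pattern) and H, E, B, C are unknown. Then M is the unique rank-≤-r matrix with those fixed blocks if and only if rank(A) = r, rank(G) = r, and rank(K) = r. -/
open Matrix

/-!
If `rank A = rank G = rank K = r`, each of the windows `[F H; A G]`, `[A G; C K]`, `[G B; K D]`,
`[H E; G B]` of a completion of rank `≤ r` has no larger rank than one of its fixed blocks, which
forces its free block: writing `F = Y₁A`, `A = GX₁`, `G = Y₂K`, one gets `H = Y₁G`, `C = KX₁`,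
`B = Y₂D` and `E = Y₁B`.

Conversely, factor `M = PQ` through `ℝ^r`, with row blocks `Pᵢ` of `P` and column blocks `Qⱼ` of
`Q`. Any change of the factors keeping the five staircase products fixed gives another completion
of rank `≤ r`, so uniqueness makes the factorization rigid. The rank-one perturbations
`P₁ + 1xᵀ` (with `xᵀQ₁ = 0`) and `Q₃ + x1ᵀ` (with `P₃x = 0`) then force `Q₁` and `P₃` to have
rank `r`. With `T = 1 + xxᵀ`, the gauge change `(P₁, Q₁) ↦ (P₁T⁻¹, TQ₁)` when `P₂x = 0`, or
`(P₃, Q₃) ↦ (P₃T, T⁻¹Q₃)` when `xᵀQ₂ = 0`, moves `C` by `(P₃x)(xᵀQ₁) ≠ 0` unless `x = 0`, so `P₂`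
and `Q₂` have rank `r` as well, and hence so do `A = P₂Q₁`, `G = P₂Q₂` and `K = P₃Q₂`.
-/

def block3 {m1 m2 m3 n1 n2 n3 : ℕ}
    (A11 : Matrix (Fin m1) (Fin n1) ℝ) (A12 : Matrix (Fin m1) (Fin n2) ℝ)
    (A13 : Matrix (Fin m1) (Fin n3) ℝ)
    (A21 : Matrix (Fin m2) (Fin n1) ℝ) (A22 : Matrix (Fin m2) (Fin n2) ℝ)
    (A23 : Matrix (Fin m2) (Fin n3) ℝ)
    (A31 : Matrix (Fin m3) (Fin n1) ℝ) (A32 : Matrix (Fin m3) (Fin n2) ℝ)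
    (A33 : Matrix (Fin m3) (Fin n3) ℝ) :
    Matrix ((Fin m1 ⊕ Fin m2) ⊕ Fin m3) ((Fin n1 ⊕ Fin n2) ⊕ Fin n3) ℝ :=
  Matrix.fromBlocks (Matrix.fromBlocks A11 A12 A21 A22) (Matrix.fromRows A13 A23)
    (Matrix.fromCols A31 A32) A33

namespace Matrix

variable {K : Type*} [Field K] {m n o p : Type*}

section Rank

variable [Fintype n] [Fintype p]

theorem rank_eq_card_width_iff {A : Matrix m n K} :
    A.rank = Fintype.card n ↔ ∀ v, A *ᵥ v = 0 → v = 0 := by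
  rw [← ker_mulVecLin_eq_bot_iff, LinearMap.ker_eq_bot, coe_mulVecLin, mulVec_injective_iff,
    linearIndependent_iff_card_eq_finrank_span, rank_eq_finrank_span_cols, eq_comm, Set.finrank]

theorem rank_eq_card_height_iff [Fintype m] {A : Matrix m n K} :
    A.rank = Fintype.card m ↔ ∀ v, v ᵥ* A = 0 → v = 0 := by
  simp only [← rank_transpose A, rank_eq_card_width_iff, mulVec_transpose]

theorem rank_mul_eq_right_of_rank_eq_card_width {A : Matrix m n K}
    (hA : A.rank = Fintype.card n) (B : Matrix n p K) : (A * B).rank = B.rank := by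
  have hinj : Function.Injective A.mulVecLin := by
    rw [← LinearMap.ker_eq_bot, ker_mulVecLin_eq_bot_iff]
    exact rank_eq_card_width_iff.mp hA
  rw [rank, rank, mulVecLin_mul, LinearMap.range_comp]
  exact (Submodule.equivMapOfInjective _ hinj _).finrank_eq.symm

theorem exists_eq_mul_of_range_le {A : Matrix m n K} {B : Matrix m p K}
    (h : LinearMap.range B.mulVecLin ≤ LinearMap.range A.mulVecLin) :
    ∃ X : Matrix n p K, B = A * X := by
  have hcol : ∀ j, ∃ v, A *ᵥ v = B.col j := fun j =>
    h (by rw [range_mulVecLin]; exact Submodule.subset_span ⟨j, rfl⟩)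
  choose X hX using hcol
  refine ⟨Xᵀ, ext fun i j => ?_⟩
  rw [← col_apply B j i, ← hX j]
  rfl

theorem exists_range_mulVecLin_eq [Fintype m] (M : Matrix m n K) {r : ℕ} (h : M.rank = r) :
    ∃ P : Matrix m (Fin r) K, LinearMap.range P.mulVecLin = LinearMap.range M.mulVecLin := by
  let b := Module.finBasisOfFinrankEq K _ h
  refine ⟨LinearMap.toMatrix'
    ((LinearMap.range M.mulVecLin).subtype ∘ₗ b.equivFun.symm.toLinearMap), ?_⟩
  rw [← toLin'_apply', toLin'_toMatrix',
    LinearMap.range_comp_of_range_eq_top _ (LinearEquiv.range _), Submodule.range_subtype]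

theorem exists_eq_mul_of_rank_eq [Fintype m] (M : Matrix m n K) {r : ℕ} (h : M.rank = r) :
    ∃ (P : Matrix m (Fin r) K) (Q : Matrix (Fin r) n K),
      M = P * Q ∧ P.rank = r ∧ Q.rank = r := by
  obtain ⟨P, hP⟩ := exists_range_mulVecLin_eq M h
  obtain ⟨Q, hQ⟩ := exists_eq_mul_of_range_le hP.ge
  refine ⟨P, Q, hQ, le_antisymm ?_ ?_, le_antisymm ?_ ?_⟩
  · simpa using rank_le_card_width P
  · calc r = M.rank := h.symm
      _ ≤ P.rank := by rw [hQ]; exact rank_mul_le_left P Q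
  · simpa using rank_le_card_height Q
  · calc r = M.rank := h.symm
      _ ≤ Q.rank := by rw [hQ]; exact rank_mul_le_right P Q

theorem range_mulVecLin_fromCols (A : Matrix m n K) (B : Matrix m p K) :
    LinearMap.range (fromCols A B).mulVecLin =
      LinearMap.range A.mulVecLin ⊔ LinearMap.range B.mulVecLin := by
  have hcol : (fromCols A B).col = Sum.elim A.col B.col := by
    funext j
    rcases j with j | j <;> rfl
  rw [range_mulVecLin, range_mulVecLin, range_mulVecLin, hcol, Set.Sum.elim_range,
    Submodule.span_union]

theorem exists_eq_mul_of_rank_fromCols_le_left [Fintype m] {A : Matrix m n K}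
    {B : Matrix m p K} (h : (fromCols A B).rank ≤ A.rank) : ∃ X : Matrix n p K, B = A * X := by
  have hA := Submodule.eq_of_le_of_finrank_le (range_mulVecLin_fromCols A B ▸ le_sup_left) h
  exact exists_eq_mul_of_range_le (hA ▸ range_mulVecLin_fromCols A B ▸ le_sup_right)

theorem exists_eq_mul_of_rank_fromCols_le_right [Fintype m] {A : Matrix m n K}
    {B : Matrix m p K} (h : (fromCols A B).rank ≤ B.rank) : ∃ X : Matrix p n K, A = B * X := by
  have hB := Submodule.eq_of_le_of_finrank_le (range_mulVecLin_fromCols A B ▸ le_sup_right) h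
  exact exists_eq_mul_of_range_le (hB ▸ range_mulVecLin_fromCols A B ▸ le_sup_left)

section FromBlocks

variable [Fintype m] [Fintype o]
  {P : Matrix m n K} {Q : Matrix m p K} {R : Matrix o n K} {S : Matrix o p K}

theorem exists_eq_mul_of_rank_fromBlocks_le₁₂ (h : (fromBlocks P Q R S).rank ≤ Q.rank) :
    ∃ X : Matrix p n K, P = Q * X := by
  rw [← fromCols_fromRows_eq_fromBlocks] at h
  obtain ⟨X, hX⟩ := exists_eq_mul_of_rank_fromCols_le_right
    (h.trans (rank_submatrix_le (fromRows Q S) Sum.inl id))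
  rw [fromRows_mul] at hX
  exact ⟨X, (fromRows_inj hX).1⟩

theorem eq_mul_of_rank_fromBlocks_le₂₁ (h : (fromBlocks P Q R S).rank ≤ R.rank)
    {Y : Matrix m o K} (hY : P = Y * R) : Q = Y * S := by
  rw [← fromCols_fromRows_eq_fromBlocks] at h
  obtain ⟨X, hX⟩ := exists_eq_mul_of_rank_fromCols_le_left
    (h.trans (rank_submatrix_le (fromRows P R) Sum.inr id))
  rw [fromRows_mul] at hX
  obtain ⟨hQ, hS⟩ := fromRows_inj hX
  rw [hQ, hS, hY, Matrix.mul_assoc]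

theorem exists_eq_mul_of_rank_fromBlocks_le₂₁ (h : (fromBlocks P Q R S).rank ≤ R.rank) :
    ∃ Y : Matrix m o K, P = Y * R := by
  rw [← rank_transpose, fromBlocks_transpose, ← rank_transpose R] at h
  obtain ⟨X, hX⟩ := exists_eq_mul_of_rank_fromBlocks_le₁₂ h
  exact ⟨Xᵀ, by rw [← transpose_transpose P, hX, transpose_mul, transpose_transpose]⟩

theorem eq_mul_of_rank_fromBlocks_le₁₂ (h : (fromBlocks P Q R S).rank ≤ Q.rank)
    {X : Matrix p n K} (hX : P = Q * X) : R = S * X := by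
  rw [← rank_transpose, fromBlocks_transpose, ← rank_transpose Q] at h
  have := eq_mul_of_rank_fromBlocks_le₂₁ h (Y := Xᵀ) (by rw [hX, transpose_mul])
  rw [← transpose_transpose R, this, transpose_mul, transpose_transpose, transpose_transpose]

end FromBlocks

end Rank

theorem vecMulVec_eq_zero_iff {α : Type*} [MulZeroClass α] [NoZeroDivisors α]
    {a : m → α} {b : n → α} : vecMulVec a b = 0 ↔ a = 0 ∨ b = 0 := by
  simp only [← ext_iff, vecMulVec_apply, zero_apply, mul_eq_zero, funext_iff, Pi.zero_apply,
    forall_or_left, forall_or_right]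

theorem eq_zero_of_mul_one_add_vecMulVec_mul_eq [Fintype n] [DecidableEq n] {P : Matrix m n K}
    {Q : Matrix n p K} (hP : ∀ v, P *ᵥ v = 0 → v = 0) (hQ : ∀ v, v ᵥ* Q = 0 → v = 0)
    {x : n → K} (h : P * (1 + vecMulVec x x) * Q = P * Q) : x = 0 := by
  rw [Matrix.mul_add, Matrix.mul_one, Matrix.add_mul, add_eq_left, mul_vecMulVec,
    vecMulVec_mul, vecMulVec_eq_zero_iff] at h
  exact h.elim (hP x) (hQ x)

theorem isUnit_det_one_add_vecMulVec_self [Fintype n] [DecidableEq n] [LinearOrder K]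
    [IsStrictOrderedRing K] (x : n → K) : IsUnit (1 + vecMulVec x x).det := by
  rw [vecMulVec_eq (Fin 1), det_one_add_replicateCol_mul_replicateRow, isUnit_iff_ne_zero]
  have : 0 ≤ x ⬝ᵥ x := Finset.sum_nonneg fun i _ => mul_self_nonneg (x i)
  positivity

end Matrix

section Rigidity

variable {K : Type*} [Field K] {ι m₁ m₂ m₃ n₁ n₂ n₃ : Type*} [Fintype ι]

def StaircaseRigid (P₁ : Matrix m₁ ι K) (P₂ : Matrix m₂ ι K) (P₃ : Matrix m₃ ι K)
    (Q₁ : Matrix ι n₁ K) (Q₂ : Matrix ι n₂ K) (Q₃ : Matrix ι n₃ K) : Prop :=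
  ∀ (P₁' : Matrix m₁ ι K) (P₂' : Matrix m₂ ι K) (P₃' : Matrix m₃ ι K)
    (Q₁' : Matrix ι n₁ K) (Q₂' : Matrix ι n₂ K) (Q₃' : Matrix ι n₃ K),
    P₁' * Q₁' = P₁ * Q₁ → P₂' * Q₁' = P₂ * Q₁ → P₂' * Q₂' = P₂ * Q₂ → P₃' * Q₂' = P₃ * Q₂ →
      P₃' * Q₃' = P₃ * Q₃ →
      P₁' * Q₂' = P₁ * Q₂ ∧ P₁' * Q₃' = P₁ * Q₃ ∧ P₂' * Q₃' = P₂ * Q₃ ∧ P₃' * Q₁' = P₃ * Q₁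

variable {P₁ : Matrix m₁ ι K} {P₂ : Matrix m₂ ι K} {P₃ : Matrix m₃ ι K}
  {Q₁ : Matrix ι n₁ K} {Q₂ : Matrix ι n₂ K} {Q₃ : Matrix ι n₃ K}

namespace StaircaseRigid

theorem vecMul_eq_zero [Nonempty m₁] (h : StaircaseRigid P₁ P₂ P₃ Q₁ Q₂ Q₃) {x : ι → K}
    (hx : x ᵥ* Q₁ = 0) : x ᵥ* Q₂ = 0 ∧ x ᵥ* Q₃ = 0 := by
  have hP₁ : (P₁ + vecMulVec 1 x) * Q₁ = P₁ * Q₁ := by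
    rw [Matrix.add_mul, vecMulVec_mul, hx, vecMulVec_eq_zero_iff.2 (.inr rfl), add_zero]
  obtain ⟨h₂, h₃, -, -⟩ := h _ P₂ P₃ Q₁ Q₂ Q₃ hP₁ rfl rfl rfl rfl
  simp only [Matrix.add_mul, add_eq_left, vecMulVec_mul, vecMulVec_eq_zero_iff, one_ne_zero,
    false_or] at h₂ h₃
  exact ⟨h₂, h₃⟩

theorem mulVec_eq_zero [Nonempty n₃] (h : StaircaseRigid P₁ P₂ P₃ Q₁ Q₂ Q₃) {x : ι → K}
    (hx : P₃ *ᵥ x = 0) : P₁ *ᵥ x = 0 ∧ P₂ *ᵥ x = 0 := by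
  have hQ₃ : P₃ * (Q₃ + vecMulVec x 1) = P₃ * Q₃ := by
    rw [Matrix.mul_add, mul_vecMulVec, hx, zero_vecMulVec, add_zero]
  obtain ⟨-, h₁, h₂, -⟩ := h P₁ P₂ P₃ Q₁ Q₂ _ rfl rfl rfl rfl hQ₃
  simp only [Matrix.mul_add, add_eq_left, mul_vecMulVec, vecMulVec_eq_zero_iff, one_ne_zero,
    or_false] at h₁ h₂
  exact ⟨h₁, h₂⟩

variable [DecidableEq ι] [LinearOrder K] [IsStrictOrderedRing K]

theorem eq_zero_of_mulVec_eq_zero (h : StaircaseRigid P₁ P₂ P₃ Q₁ Q₂ Q₃)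
    (hP₃ : ∀ v, P₃ *ᵥ v = 0 → v = 0) (hQ₁ : ∀ v, v ᵥ* Q₁ = 0 → v = 0) {x : ι → K}
    (hx : P₂ *ᵥ x = 0) : x = 0 := by
  set T := 1 + vecMulVec x x
  have hT : IsUnit T.det := isUnit_det_one_add_vecMulVec_self x
  have hP₂ : P₂ * T = P₂ := by
    rw [Matrix.mul_add, Matrix.mul_one, mul_vecMulVec, hx, zero_vecMulVec, add_zero]
  have hP₂' : P₂ * T⁻¹ = P₂ := by
    rw [← hP₂, Matrix.mul_assoc, mul_nonsing_inv _ hT, Matrix.mul_one, hP₂]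
  obtain ⟨-, -, -, hC⟩ := h (P₁ * T⁻¹) P₂ P₃ (T * Q₁) Q₂ Q₃
    (by rw [Matrix.mul_assoc, ← Matrix.mul_assoc T⁻¹, nonsing_inv_mul _ hT, Matrix.one_mul])
    (by rw [← Matrix.mul_assoc, hP₂]) rfl rfl rfl
  exact eq_zero_of_mul_one_add_vecMulVec_mul_eq hP₃ hQ₁ (by rw [Matrix.mul_assoc, hC])

theorem eq_zero_of_vecMul_eq_zero (h : StaircaseRigid P₁ P₂ P₃ Q₁ Q₂ Q₃)
    (hP₃ : ∀ v, P₃ *ᵥ v = 0 → v = 0) (hQ₁ : ∀ v, v ᵥ* Q₁ = 0 → v = 0) {x : ι → K}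
    (hx : x ᵥ* Q₂ = 0) : x = 0 := by
  set T := 1 + vecMulVec x x
  have hT : IsUnit T.det := isUnit_det_one_add_vecMulVec_self x
  have hQ₂ : T * Q₂ = Q₂ := by
    rw [Matrix.add_mul, Matrix.one_mul, vecMulVec_mul, hx, vecMulVec_eq_zero_iff.2 (.inr rfl),
      add_zero]
  obtain ⟨-, -, -, hC⟩ := h P₁ P₂ (P₃ * T) Q₁ Q₂ (T⁻¹ * Q₃) rfl rfl rfl
    (by rw [Matrix.mul_assoc, hQ₂])
    (by rw [Matrix.mul_assoc, ← Matrix.mul_assoc T, mul_nonsing_inv _ hT, Matrix.one_mul])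
  exact eq_zero_of_mul_one_add_vecMulVec_mul_eq hP₃ hQ₁ hC

end StaircaseRigid

end Rigidity

section Block3

variable {m1 m2 m3 n1 n2 n3 r : ℕ}
  {F : Matrix (Fin m1) (Fin n1) ℝ} {H : Matrix (Fin m1) (Fin n2) ℝ}
  {E : Matrix (Fin m1) (Fin n3) ℝ} {A : Matrix (Fin m2) (Fin n1) ℝ}
  {G : Matrix (Fin m2) (Fin n2) ℝ} {B : Matrix (Fin m2) (Fin n3) ℝ}
  {C : Matrix (Fin m3) (Fin n1) ℝ} {K : Matrix (Fin m3) (Fin n2) ℝ}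
  {D : Matrix (Fin m3) (Fin n3) ℝ}

theorem block3_inj {F' : Matrix (Fin m1) (Fin n1) ℝ} {H' : Matrix (Fin m1) (Fin n2) ℝ}
    {E' : Matrix (Fin m1) (Fin n3) ℝ} {A' : Matrix (Fin m2) (Fin n1) ℝ}
    {G' : Matrix (Fin m2) (Fin n2) ℝ} {B' : Matrix (Fin m2) (Fin n3) ℝ}
    {C' : Matrix (Fin m3) (Fin n1) ℝ} {K' : Matrix (Fin m3) (Fin n2) ℝ}
    {D' : Matrix (Fin m3) (Fin n3) ℝ} :
    block3 F H E A G B C K D = block3 F' H' E' A' G' B' C' K' D' ↔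
      F = F' ∧ H = H' ∧ E = E' ∧ A = A' ∧ G = G' ∧ B = B' ∧ C = C' ∧ K = K' ∧ D = D' := by
  simp only [block3, fromBlocks_inj, fromRows_ext_iff, fromCols_ext_iff, and_assoc]
  tauto

theorem fromRows_mul_fromCols_eq_block3 {ι : Type*} [Fintype ι]
    (P₁ : Matrix (Fin m1) ι ℝ) (P₂ : Matrix (Fin m2) ι ℝ) (P₃ : Matrix (Fin m3) ι ℝ)
    (Q₁ : Matrix ι (Fin n1) ℝ) (Q₂ : Matrix ι (Fin n2) ℝ) (Q₃ : Matrix ι (Fin n3) ℝ) :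
    fromRows (fromRows P₁ P₂) P₃ * fromCols (fromCols Q₁ Q₂) Q₃ =
      block3 (P₁ * Q₁) (P₁ * Q₂) (P₁ * Q₃) (P₂ * Q₁) (P₂ * Q₂) (P₂ * Q₃)
        (P₃ * Q₁) (P₃ * Q₂) (P₃ * Q₃) := by
  rw [fromRows_mul_fromCols, fromRows_mul_fromCols, fromRows_mul, mul_fromCols]
  rfl

theorem exists_block3_factorization (hM : (block3 F H E A G B C K D).rank = r) :
    ∃ (P₁ : Matrix (Fin m1) (Fin r) ℝ) (P₂ : Matrix (Fin m2) (Fin r) ℝ)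
      (P₃ : Matrix (Fin m3) (Fin r) ℝ) (Q₁ : Matrix (Fin r) (Fin n1) ℝ)
      (Q₂ : Matrix (Fin r) (Fin n2) ℝ) (Q₃ : Matrix (Fin r) (Fin n3) ℝ),
      (∀ v, P₁ *ᵥ v = 0 → P₂ *ᵥ v = 0 → P₃ *ᵥ v = 0 → v = 0) ∧
      (∀ v, v ᵥ* Q₁ = 0 → v ᵥ* Q₂ = 0 → v ᵥ* Q₃ = 0 → v = 0) ∧
      block3 F H E A G B C K D = block3 (P₁ * Q₁) (P₁ * Q₂) (P₁ * Q₃) (P₂ * Q₁) (P₂ * Q₂)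
        (P₂ * Q₃) (P₃ * Q₁) (P₃ * Q₂) (P₃ * Q₃) := by
  obtain ⟨P, Q, hPQ, hP, hQ⟩ := exists_eq_mul_of_rank_eq _ hM
  have hPinj := rank_eq_card_width_iff.1 (hP.trans (Fintype.card_fin r).symm)
  have hQinj := rank_eq_card_height_iff.1 (hQ.trans (Fintype.card_fin r).symm)
  rw [← fromRows_toRows P, ← fromRows_toRows P.toRows₁] at hPQ hPinj
  rw [← fromCols_toCols Q, ← fromCols_toCols Q.toCols₁] at hPQ hQinj
  refine ⟨_, _, _, _, _, _, fun v h₁ h₂ h₃ => hPinj v ?_, fun v h₁ h₂ h₃ => hQinj v ?_,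
    hPQ.trans (fromRows_mul_fromCols_eq_block3 _ _ _ _ _ _)⟩
  · simp only [fromRows_mulVec, h₁, h₂, h₃, Sum.elim_zero_zero]
  · simp only [vecMul_fromCols, h₁, h₂, h₃, Sum.elim_zero_zero]

theorem staircaseRigid_of_unique {P₁ : Matrix (Fin m1) (Fin r) ℝ} {P₂ : Matrix (Fin m2) (Fin r) ℝ}
    {P₃ : Matrix (Fin m3) (Fin r) ℝ} {Q₁ : Matrix (Fin r) (Fin n1) ℝ}
    {Q₂ : Matrix (Fin r) (Fin n2) ℝ} {Q₃ : Matrix (Fin r) (Fin n3) ℝ}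
    (hPQ : block3 F H E A G B C K D = block3 (P₁ * Q₁) (P₁ * Q₂) (P₁ * Q₃) (P₂ * Q₁) (P₂ * Q₂)
        (P₂ * Q₃) (P₃ * Q₁) (P₃ * Q₂) (P₃ * Q₃))
    (hU : ∀ H' E' B' C', (block3 F H' E' A G B' C' K D).rank ≤ r →
      H' = H ∧ E' = E ∧ B' = B ∧ C' = C) :
    StaircaseRigid P₁ P₂ P₃ Q₁ Q₂ Q₃ := by
  obtain ⟨rfl, rfl, rfl, rfl, rfl, rfl, rfl, rfl, rfl⟩ := block3_inj.1 hPQ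
  intro P₁' P₂' P₃' Q₁' Q₂' Q₃' h₁₁ h₂₁ h₂₂ h₃₂ h₃₃
  refine hU _ _ _ _ ?_
  rw [← h₁₁, ← h₂₁, ← h₂₂, ← h₃₂, ← h₃₃, ← fromRows_mul_fromCols_eq_block3]
  exact (rank_mul_le_left _ _).trans ((rank_le_card_width _).trans_eq (Fintype.card_fin r))

variable (F H E A G B C K D) in
theorem rank_fromBlocks_le_rank_block3 :
    (fromBlocks F H A G).rank ≤ (block3 F H E A G B C K D).rank ∧
    (fromBlocks A G C K).rank ≤ (block3 F H E A G B C K D).rank ∧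
    (fromBlocks G B K D).rank ≤ (block3 F H E A G B C K D).rank ∧
    (fromBlocks H E G B).rank ≤ (block3 F H E A G B C K D).rank := by
  have h₁₁ : fromBlocks F H A G = (block3 F H E A G B C K D).submatrix Sum.inl Sum.inl := by
    ext (i | i) (j | j) <;> rfl
  have h₂₁ : fromBlocks A G C K = (block3 F H E A G B C K D).submatrix
      (Sum.elim (Sum.inl ∘ Sum.inr) Sum.inr) Sum.inl := by
    ext (i | i) (j | j) <;> rfl
  have h₂₂ : fromBlocks G B K D = (block3 F H E A G B C K D).submatrix
      (Sum.elim (Sum.inl ∘ Sum.inr) Sum.inr) (Sum.elim (Sum.inl ∘ Sum.inr) Sum.inr) := by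
    ext (i | i) (j | j) <;> rfl
  have h₁₂ : fromBlocks H E G B = (block3 F H E A G B C K D).submatrix
      Sum.inl (Sum.elim (Sum.inl ∘ Sum.inr) Sum.inr) := by
    ext (i | i) (j | j) <;> rfl
  rw [h₁₁, h₂₁, h₂₂, h₁₂]
  exact ⟨rank_submatrix_le _ _ _, rank_submatrix_le _ _ _, rank_submatrix_le _ _ _,
    rank_submatrix_le _ _ _⟩

theorem ranks_eq_of_unique_completion (hm1 : 0 < m1) (hn3 : 0 < n3)
    (hM : (block3 F H E A G B C K D).rank = r)
    (hU : ∀ H' E' B' C', (block3 F H' E' A G B' C' K D).rank ≤ r →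
      H' = H ∧ E' = E ∧ B' = B ∧ C' = C) :
    A.rank = r ∧ G.rank = r ∧ K.rank = r := by
  have : Nonempty (Fin m1) := ⟨⟨0, hm1⟩⟩
  have : Nonempty (Fin n3) := ⟨⟨0, hn3⟩⟩
  obtain ⟨P₁, P₂, P₃, Q₁, Q₂, Q₃, hP, hQ, hPQ⟩ := exists_block3_factorization hM
  have hrigid := staircaseRigid_of_unique hPQ hU
  have hQ₁ : ∀ v, v ᵥ* Q₁ = 0 → v = 0 := fun v hv =>
    hQ v hv (hrigid.vecMul_eq_zero hv).1 (hrigid.vecMul_eq_zero hv).2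
  have hP₃ : ∀ v, P₃ *ᵥ v = 0 → v = 0 := fun v hv =>
    hP v (hrigid.mulVec_eq_zero hv).1 (hrigid.mulVec_eq_zero hv).2 hv
  have hP₂ : ∀ v, P₂ *ᵥ v = 0 → v = 0 := fun _ => hrigid.eq_zero_of_mulVec_eq_zero hP₃ hQ₁
  have hQ₂ : ∀ v, v ᵥ* Q₂ = 0 → v = 0 := fun _ => hrigid.eq_zero_of_vecMul_eq_zero hP₃ hQ₁
  obtain ⟨-, -, -, rfl, rfl, -, -, rfl, -⟩ := block3_inj.1 hPQ
  simp only [rank_mul_eq_right_of_rank_eq_card_width (rank_eq_card_width_iff.2 hP₂),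
    rank_mul_eq_right_of_rank_eq_card_width (rank_eq_card_width_iff.2 hP₃),
    rank_eq_card_height_iff.2 hQ₁, rank_eq_card_height_iff.2 hQ₂, Fintype.card_fin, and_self]

theorem free_blocks_eq_of_rank_le {Y₁ : Matrix (Fin m1) (Fin m2) ℝ}
    {X₁ : Matrix (Fin n2) (Fin n1) ℝ} {Y₂ : Matrix (Fin m2) (Fin m3) ℝ}
    (hY₁ : F = Y₁ * A) (hX₁ : A = G * X₁) (hY₂ : G = Y₂ * K)
    (hA : A.rank = r) (hG : G.rank = r) (hK : K.rank = r)
    (hN : (block3 F H E A G B C K D).rank ≤ r) :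
    H = Y₁ * G ∧ E = Y₁ * (Y₂ * D) ∧ B = Y₂ * D ∧ C = K * X₁ := by
  obtain ⟨h₁₁, h₂₁, h₂₂, h₁₂⟩ := rank_fromBlocks_le_rank_block3 F H E A G B C K D
  have hH : H = Y₁ * G := eq_mul_of_rank_fromBlocks_le₂₁ (h₁₁.trans (hN.trans hA.ge)) hY₁
  have hB : B = Y₂ * D := eq_mul_of_rank_fromBlocks_le₂₁ (h₂₂.trans (hN.trans hK.ge)) hY₂
  have hC : C = K * X₁ := eq_mul_of_rank_fromBlocks_le₁₂ (h₂₁.trans (hN.trans hG.ge)) hX₁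
  have hE : E = Y₁ * B := eq_mul_of_rank_fromBlocks_le₂₁ (h₁₂.trans (hN.trans hG.ge)) hH
  exact ⟨hH, hB ▸ hE, hB, hC⟩

theorem unique_completion_of_ranks_eq (hM : (block3 F H E A G B C K D).rank ≤ r)
    (hA : A.rank = r) (hG : G.rank = r) (hK : K.rank = r) :
    ∀ H' E' B' C', (block3 F H' E' A G B' C' K D).rank ≤ r →
      H' = H ∧ E' = E ∧ B' = B ∧ C' = C := by
  obtain ⟨h₁₁, h₂₁, h₂₂, -⟩ := rank_fromBlocks_le_rank_block3 F H E A G B C K D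
  obtain ⟨Y₁, hY₁⟩ := exists_eq_mul_of_rank_fromBlocks_le₂₁ (h₁₁.trans (hM.trans hA.ge))
  obtain ⟨X₁, hX₁⟩ := exists_eq_mul_of_rank_fromBlocks_le₁₂ (h₂₁.trans (hM.trans hG.ge))
  obtain ⟨Y₂, hY₂⟩ := exists_eq_mul_of_rank_fromBlocks_le₂₁ (h₂₂.trans (hM.trans hK.ge))
  obtain ⟨hH, hE, hB, hC⟩ := free_blocks_eq_of_rank_le hY₁ hX₁ hY₂ hA hG hK hM
  intro H' E' B' C' hN
  obtain ⟨hH', hE', hB', hC'⟩ := free_blocks_eq_of_rank_le hY₁ hX₁ hY₂ hA hG hK hN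
  exact ⟨hH'.trans hH.symm, hE'.trans hE.symm, hB'.trans hB.symm, hC'.trans hC.symm⟩

end Block3

theorem staircase_three_unique_iff_general {m1 m2 m3 n1 n2 n3 r : ℕ}
    (hm1 : 0 < m1) (hn3 : 0 < n3)
    (F : Matrix (Fin m1) (Fin n1) ℝ) (H : Matrix (Fin m1) (Fin n2) ℝ)
    (E : Matrix (Fin m1) (Fin n3) ℝ)
    (A : Matrix (Fin m2) (Fin n1) ℝ) (G : Matrix (Fin m2) (Fin n2) ℝ)
    (B : Matrix (Fin m2) (Fin n3) ℝ)
    (C : Matrix (Fin m3) (Fin n1) ℝ) (K : Matrix (Fin m3) (Fin n2) ℝ)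
    (D : Matrix (Fin m3) (Fin n3) ℝ)
    (hM : (block3 F H E A G B C K D).rank = r) :
    (∀ (H' : Matrix (Fin m1) (Fin n2) ℝ) (E' : Matrix (Fin m1) (Fin n3) ℝ)
        (B' : Matrix (Fin m2) (Fin n3) ℝ) (C' : Matrix (Fin m3) (Fin n1) ℝ),
        (block3 F H' E' A G B' C' K D).rank ≤ r →
          H' = H ∧ E' = E ∧ B' = B ∧ C' = C) ↔
      A.rank = r ∧ G.rank = r ∧ K.rank = r :=
  ⟨ranks_eq_of_unique_completion hm1 hn3 hM,
    fun ⟨hA, hG, hK⟩ => unique_completion_of_ranks_eq hM.le hA hG hK⟩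

/-- For `M = [[F,H,E],[A,G,B],[C,K,D]]` of rank `r` with the staircase blocks
`F, A, G, K, D` fixed and `H, E, B, C` unknown, the completion is unique iff
`rank A = rank G = rank K = r`. -/
theorem staircase_three_unique_iff {m1 m2 m3 n1 n2 n3 r : ℕ}
    (hm1 : 0 < m1) (hm2 : 0 < m2) (hm3 : 0 < m3)
    (hn1 : 0 < n1) (hn2 : 0 < n2) (hn3 : 0 < n3) (hr : 1 ≤ r)
    (F : Matrix (Fin m1) (Fin n1) ℝ) (H : Matrix (Fin m1) (Fin n2) ℝ)
    (E : Matrix (Fin m1) (Fin n3) ℝ)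
    (A : Matrix (Fin m2) (Fin n1) ℝ) (G : Matrix (Fin m2) (Fin n2) ℝ)
    (B : Matrix (Fin m2) (Fin n3) ℝ)
    (C : Matrix (Fin m3) (Fin n1) ℝ) (K : Matrix (Fin m3) (Fin n2) ℝ)
    (D : Matrix (Fin m3) (Fin n3) ℝ)
    (hM : (block3 F H E A G B C K D).rank = r) :
    (∀ (H' : Matrix (Fin m1) (Fin n2) ℝ) (E' : Matrix (Fin m1) (Fin n3) ℝ)
        (B' : Matrix (Fin m2) (Fin n3) ℝ) (C' : Matrix (Fin m3) (Fin n1) ℝ),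
        (block3 F H' E' A G B' C' K D).rank ≤ r →
          H' = H ∧ E' = E ∧ B' = B ∧ C' = C) ↔
      A.rank = r ∧ G.rank = r ∧ K.rank = r :=
  staircase_three_unique_iff_general hm1 hn3 F H E A G B C K D hM
end
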